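/- Let A be a 3×3 integer matrix with det A = 1 or det A = −1, and assume A is hyperbolic, i.e. no complex root of its characteristic polynomial has absolute value 1. Then the characteristic polynomial of A, regarded as a polynomial with rational coefficients, is irreducible over ℚ; consequently its three complex roots are pairwise distinct, i.e. every eigenvalue of A has algebraic multiplicity one. -/

import Mathlib

/-!
A rational root of the monic integer polynomial `χ_A` is an integer, and it divides the constant
coefficient `± det A = ± 1`; so it is `± 1`, a root on the unit circle, which hyperbolicity
excludes. A cubic without rational roots is irreducible over `ℚ`, and an irreducible polynomial
over a field of characteristic zero is separable, so its complex roots are simple.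
-/

open Polynomial

theorem Polynomial.IsRoot.isUnit_of_isUnit_coeff_zero {R : Type*} [CommRing R] {p : R[X]} {x : R}
    (hx : p.IsRoot x) (hp : IsUnit (p.coeff 0)) : IsUnit x :=
  isUnit_of_dvd_unit hx.dvd_coeff_zero hp

theorem Matrix.isUnit_charpoly_coeff_zero {n R : Type*} [Fintype n] [DecidableEq n] [CommRing R]
    {A : Matrix n n R} (hA : IsUnit A.det) : IsUnit (A.charpoly.coeff 0) := by
  rw [Matrix.det_eq_sign_charpoly_coeff] at hA
  exact isUnit_of_mul_isUnit_right hA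

theorem Polynomial.Monic.exists_isRoot_of_isRoot_map {A K : Type*} [CommRing A] [IsDomain A]
    [IsIntegrallyClosed A] [Field K] [Algebra A K] [IsFractionRing A K] {p : A[X]} (hp : p.Monic)
    {x : K} (hx : (p.map (algebraMap A K)).IsRoot x) :
    ∃ a : A, p.IsRoot a ∧ algebraMap A K a = x := by
  have hint : IsIntegral A x := ⟨p, hp, by rwa [eval₂_eq_eval_map]⟩
  obtain ⟨a, rfl⟩ := IsIntegrallyClosed.isIntegral_iff.mp hint
  refine ⟨a, IsFractionRing.injective A K ?_, rfl⟩
  rw [IsRoot, eval_map, eval₂_at_apply] at hx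
  rw [hx, map_zero]

theorem Polynomial.Monic.roots_map_rat_eq_zero {p : ℤ[X]} (hp : p.Monic) (h0 : IsUnit (p.coeff 0))
    (hcircle : ∀ z : ℂ, (p.map (Int.castRingHom ℂ)).IsRoot z → ‖z‖ ≠ 1) :
    (p.map (Int.castRingHom ℚ)).roots = 0 := by
  refine Multiset.eq_zero_of_forall_notMem fun x hx => ?_
  rw [mem_roots (hp.map _).ne_zero] at hx
  obtain ⟨n, hn, -⟩ := hp.exists_isRoot_of_isRoot_map (K := ℚ) hx
  have hnorm : ‖(n : ℂ)‖ = 1 := by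
    rw [Complex.norm_intCast, ← Int.cast_abs,
      Int.isUnit_iff_abs_eq.mp (hn.isUnit_of_isUnit_coeff_zero h0), Int.cast_one]
  exact hcircle n (by simpa using hn.map (f := Int.castRingHom ℂ)) hnorm

theorem Polynomial.nodup_roots_map_of_irreducible_map_rat {K : Type*} [Field K] [CharZero K]
    {p : ℤ[X]} (hp : Irreducible (p.map (Int.castRingHom ℚ))) :
    (p.map (Int.castRingHom K)).roots.Nodup := by
  have hfactor :
      p.map (Int.castRingHom K) = (p.map (Int.castRingHom ℚ)).map (algebraMap ℚ K) := by
    rw [map_map,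
      RingHom.ext_int ((algebraMap ℚ K).comp (Int.castRingHom ℚ)) (Int.castRingHom K)]
  rw [hfactor]
  exact nodup_roots hp.separable.map

/-- Let `A` be a `3×3` integer matrix with `det A = ±1`, and assume
`A` is hyperbolic: no complex root of its characteristic polynomial has absolute
value `1`. Then the characteristic polynomial of `A`, regarded over `ℚ`, is
irreducible; consequently its three complex roots are pairwise distinct, i.e. every
eigenvalue of `A` has algebraic multiplicity one. -/
theorem stmt11 (A : Matrix (Fin 3) (Fin 3) ℤ) (hdet : A.det = 1 ∨ A.det = -1)
    (hhyp : ∀ z : ℂ, (A.charpoly.map (Int.castRingHom ℂ)).IsRoot z → ‖z‖ ≠ 1) :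
    Irreducible (A.charpoly.map (Int.castRingHom ℚ)) ∧
      Multiset.card (A.charpoly.map (Int.castRingHom ℂ)).roots = 3 ∧
      (A.charpoly.map (Int.castRingHom ℂ)).roots.Nodup := by
  have hmonic := A.charpoly_monic
  have hdeg : A.charpoly.natDegree = 3 := by simp
  have hunit : IsUnit A.det := by rcases hdet with h | h <;> simp [h]
  have hirr : Irreducible (A.charpoly.map (Int.castRingHom ℚ)) := by
    refine (irreducible_iff_roots_eq_zero_of_degree_le_three ?_ ?_).mpr
      (hmonic.roots_map_rat_eq_zero (Matrix.isUnit_charpoly_coeff_zero hunit) hhyp) <;>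
      simp [hmonic.natDegree_map, hdeg]
  refine ⟨hirr, ?_, nodup_roots_map_of_irreducible_map_rat hirr⟩
  rw [IsAlgClosed.card_roots_map_eq_natDegree_of_injective _ Int.cast_injective, hdeg]
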